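/- arXiv:2107.04393 — 5 statements merged into one kernel-verified Lean document; each statement's English description precedes it below -/
import Mathlib

section
/- Backward induction on a finite extensive-form game of perfect information always produces a subgame perfect equilibrium; in particular every finite perfect-information game has at least one SPE in pure strategies. -/
/-! Finite extensive-form games of perfect information, as binary game trees. -/

inductive GameTree (n : ℕ) : Type
  | leaf (u : Fin n → ℝ) : GameTree n
  | node (owner : Fin n) (l r : GameTree n) : GameTree n

namespace GameTree

variable {n : ℕ}

/-- Backward-induction utility vector (ties broken toward the right child). -/
noncomputable def BI : GameTree n → (Fin n → ℝ)
  | leaf u => u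
  | node j l r => if (BI r) j < (BI l) j then BI l else BI r

/-- The list of all subgames (subtrees) of a game. -/
def subtrees : GameTree n → List (GameTree n)
  | leaf u => [leaf u]
  | node j l r => node j l r :: (subtrees l ++ subtrees r)

/-- Number of nodes. -/
def size : GameTree n → ℕ
  | leaf _ => 1
  | node _ l r => size l + size r + 1

/-- Number of terminal nodes. -/
def numLeaves : GameTree n → ℕ
  | leaf _ => 1
  | node _ l r => numLeaves l + numLeaves r

def leavesList : GameTree n → List (Fin n → ℝ)
  | leaf u => [u]
  | node _ l r => leavesList l ++ leavesList r

def leafUtils : GameTree n → Set (Fin n → ℝ)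
  | leaf u => {u}
  | node _ l r => leafUtils l ∪ leafUtils r

/-- Generic form: each player's utilities at the leaves are pairwise distinct. -/
def Generic (G : GameTree n) : Prop :=
  ∀ i : Fin n, (G.leavesList.map (fun u => u i)).Nodup

/-- The outcome induced by a (pure) strategy profile: at each node the owner
chooses the left child iff their strategy says `true` there. -/
noncomputable def play (s : Fin n → GameTree n → Bool) : GameTree n → (Fin n → ℝ)
  | leaf u => u
  | node j l r => if s j (node j l r) then play s l else play s r

/-- Nash equilibrium of the (sub)game `G`: no unilateral deviation helps. -/
def NashAt (s : Fin n → GameTree n → Bool) (G : GameTree n) : Prop :=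
  ∀ i : Fin n, ∀ s' : GameTree n → Bool,
    play (Function.update s i s') G i ≤ play s G i

/-- Subgame perfect equilibrium: Nash in every subgame. -/
def IsSPE (s : Fin n → GameTree n → Bool) (G : GameTree n) : Prop :=
  ∀ t ∈ subtrees G, NashAt s t

/-- Apply a cut (smart contract) of player `i`'s moves: at each `i`-owned node
the cut `c` says which children remain available (`true` = kept). -/
def applyCut (i : Fin n) (c : GameTree n → Bool × Bool) : GameTree n → GameTree n
  | leaf u => leaf u
  | node j l r =>
    if j = i then
      if (c (node j l r)).1 && !(c (node j l r)).2 then applyCut i c l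
      else if !(c (node j l r)).1 && (c (node j l r)).2 then applyCut i c r
      else node j (applyCut i c l) (applyCut i c r)
    else node j (applyCut i c l) (applyCut i c r)

/-- A valid cut never removes all moves at a node, so every remaining node can
still reach a leaf. -/
def ValidCut (i : Fin n) (c : GameTree n → Bool × Bool) (G : GameTree n) : Prop :=
  ∀ t ∈ subtrees G, c t ≠ (false, false)

end GameTree


open GameTree in
/-- The backward-induction strategy profile: at each node the owner moves to the
child maximizing their own utility (ties broken toward the right child). -/
noncomputable def biStrategy (n : ℕ) : Fin n → GameTree n → Bool := fun _ t =>
  match t with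
  | .node j l r => decide ((GameTree.BI r) j < (GameTree.BI l) j)
  | .leaf _ => true

open GameTree in
lemma play_bi_eq {n : ℕ} (t : GameTree n) : play (biStrategy n) t = BI t := by
  induction t with
  | leaf u => rfl
  | node j l r ihl ihr =>
    simp only [play, BI, biStrategy, ihl, ihr, decide_eq_true_eq]

open GameTree in
lemma play_dev_le {n : ℕ} (i : Fin n) (s' : GameTree n → Bool) (t : GameTree n) :
    play (Function.update (biStrategy n) i s') t i ≤ BI t i := by
  induction t with
  | leaf u => simp [play, BI]
  | node j l r ihl ihr =>
    by_cases hj : j = i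
    · subst hj
      have hL : BI l j ≤ BI (node j l r) j := by
        simp only [BI]; split_ifs with h <;> linarith
      have hR : BI r j ≤ BI (node j l r) j := by
        simp only [BI]; split_ifs with h <;> linarith
      simp only [play]
      split_ifs with h
      · exact le_trans ihl hL
      · exact le_trans ihr hR
    · have hup : Function.update (biStrategy n) i s' j = biStrategy n j :=
        Function.update_of_ne hj _ _
      simp only [play, hup, biStrategy, BI, decide_eq_true_eq]
      split_ifs with h
      · exact ihl
      · exact ihr

open GameTree in
/-- Backward induction always produces a subgame perfect
equilibrium; in particular every finite perfect-information game has at least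
one SPE in pure strategies. -/
theorem backward_induction_is_SPE {n : ℕ} (G : GameTree n) :
    IsSPE (biStrategy n) G ∧
    (∀ t ∈ subtrees G, play (biStrategy n) t = BI t) ∧
    ∃ s : Fin n → GameTree n → Bool, IsSPE s G := by
  have hspe : IsSPE (biStrategy n) G := by
    intro t _ i s'
    rw [play_bi_eq]
    exact play_dev_le i s' t
  exact ⟨hspe, fun t _ => play_bi_eq t, ⟨biStrategy n, hspe⟩⟩
end

section
/- The empty cut is always a valid cut for any player, and the game restricted by the empty cut equals the original game. Consequently, in the expanded game obtained by adding a smart contract move for player i at the root, player i's SPE utility is at least their SPE utility in the original game (commitment never hurts the committing player in perfect-information pure-strategy games). -/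
open GameTree in
lemma GameTree.applyCut_id {n : ℕ} (i : Fin n) (G : GameTree n) :
    applyCut i (fun _ => (true, true)) G = G := by
  induction G with
  | leaf u => rfl
  | node j l r hl hr => simp [applyCut, hl, hr]

open GameTree in
lemma GameTree.BI_mem_leaves {n : ℕ} (G : GameTree n) : BI G ∈ leavesList G := by
  induction G with
  | leaf u => simp [BI, leavesList]
  | node j l r hl hr =>
    simp only [BI, leavesList, List.mem_append]
    split
    · exact Or.inl hl
    · exact Or.inr hr

open GameTree in
lemma GameTree.leaves_applyCut {n : ℕ} (i : Fin n) (c : GameTree n → Bool × Bool)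
    (G : GameTree n) : ∀ x ∈ leavesList (applyCut i c G), x ∈ leavesList G := by
  induction G with
  | leaf u => intro x hx; simpa [applyCut] using hx
  | node j l r hl hr =>
    intro x hx
    simp only [leavesList, List.mem_append]
    simp only [applyCut] at hx
    split_ifs at hx with h1 h2 h3
    · exact Or.inl (hl x hx)
    · exact Or.inr (hr x hx)
    all_goals
      simp only [leavesList, List.mem_append] at hx
      rcases hx with hx | hx
      exacts [Or.inl (hl x hx), Or.inr (hr x hx)]


open GameTree in
/-- The empty cut is always a valid cut for any player, and the
game restricted by the empty cut is the original game.  Consequently, in the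
expanded game obtained by adding a smart contract move for player `i` at the
root (whose SPE value for `i` is the supremum over all valid cuts of `i`'s
backward-induction utility in the restricted game), player `i`'s SPE utility is
at least their SPE utility in the original game: commitment never hurts. -/
theorem empty_cut_and_commitment_never_hurts {n : ℕ} (i : Fin n)
    (G : GameTree n) (hG : G.Generic) :
    ValidCut i (fun _ => (true, true)) G ∧
    applyCut i (fun _ => (true, true)) G = G ∧
    BI G i ≤ sSup {x : ℝ | ∃ c : GameTree n → Bool × Bool,
      ValidCut i c G ∧ x = BI (applyCut i c G) i} := by
  refine ⟨fun t _ => by simp, GameTree.applyCut_id i G, ?_⟩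
  have hmem : BI G i ∈ {x : ℝ | ∃ c : GameTree n → Bool × Bool,
      ValidCut i c G ∧ x = BI (applyCut i c G) i} :=
    ⟨fun _ => (true, true), fun t _ => by simp, by rw [GameTree.applyCut_id]⟩
  apply le_csSup _ hmem
  have hsub : {x : ℝ | ∃ c : GameTree n → Bool × Bool,
      ValidCut i c G ∧ x = BI (applyCut i c G) i} ⊆
      ↑((G.leavesList.map (fun u => u i)).toFinset) := by
    rintro x ⟨c, _, rfl⟩
    simp only [Finset.coe_sort_coe, List.coe_toFinset, List.mem_map, Set.mem_setOf_eq]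
    exact ⟨BI (applyCut i c G), GameTree.leaves_applyCut i c G _ (GameTree.BI_mem_leaves _), rfl⟩
  exact (Set.Finite.subset ((G.leavesList.map (fun u => u i)).toFinset.finite_toSet) hsub).bddAbove
end

section
/- In a two-player finite perfect-information game in generic form, the SPE outcome of the single-contract expanded game (contract for the leader) equals the (pure-strategy) Stackelberg equilibrium outcome with that player as leader: the leader's utility is the maximum over leader strategies s_L of u_L(s_L, BR(s_L)), where BR(s_L) is the follower's best response. -/
namespace GameTree

/-- Outcome when the leader `L` is committed to the pure strategy `sL` and the
follower plays a best response (computed by backward induction; ties for the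
follower broken toward the right child, which are absent in generic form). -/
noncomputable def leaderPlay (L : Fin 2) (sL : GameTree 2 → Bool) :
    GameTree 2 → (Fin 2 → ℝ)
  | leaf u => u
  | node j l r =>
    if j = L then
      (if sL (node j l r) then leaderPlay L sL l else leaderPlay L sL r)
    else if (leaderPlay L sL r) j < (leaderPlay L sL l) j then leaderPlay L sL l
    else leaderPlay L sL r

end GameTree

namespace GameTree

lemma mem_subtrees_left {j : Fin 2} {l r t : GameTree 2} (h : t ∈ subtrees l) :
    t ∈ subtrees (node j l r) := by
  simp [subtrees]; tauto

lemma mem_subtrees_right {j : Fin 2} {l r t : GameTree 2} (h : t ∈ subtrees r) :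
    t ∈ subtrees (node j l r) := by
  simp [subtrees]; tauto

lemma self_mem_subtrees (G : GameTree 2) : G ∈ subtrees G := by
  cases G <;> simp [subtrees]

/-- Strategy extracted from a cut: commit to the unique kept child when the cut
is a singleton, and to the backward-induction-optimal child otherwise. -/
noncomputable def sLofCut (L : Fin 2) (c : GameTree 2 → Bool × Bool) :
    GameTree 2 → Bool
  | leaf _ => true
  | node j l r =>
    if c (node j l r) = (true, true) then
      if (BI (applyCut L c r)) L < (BI (applyCut L c l)) L then true else false
    else (c (node j l r)).1

lemma leaderPlay_sLofCut (L : Fin 2) (c : GameTree 2 → Bool × Bool) :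
    ∀ G : GameTree 2, ValidCut L c G →
      leaderPlay L (sLofCut L c) G = BI (applyCut L c G) := by
  intro G
  induction G with
  | leaf u => intro _; simp [leaderPlay, applyCut, BI]
  | node j l r ihl ihr =>
    intro hv
    have hvl : ValidCut L c l := fun t ht => hv t (mem_subtrees_left ht)
    have hvr : ValidCut L c r := fun t ht => hv t (mem_subtrees_right ht)
    have hl := ihl hvl
    have hr := ihr hvr
    have hself := hv _ (self_mem_subtrees (node j l r))
    by_cases hj : j = L
    · subst hj
      rcases hc1 : (c (node j l r)).1 <;> rcases hc2 : (c (node j l r)).2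
      · exact absurd (Prod.ext hc1 hc2) hself
      · have hcc : c (node j l r) = (false, true) := Prod.ext hc1 hc2
        simp [leaderPlay, applyCut, sLofCut, hcc, hl, hr]
      · have hcc : c (node j l r) = (true, false) := Prod.ext hc1 hc2
        simp [leaderPlay, applyCut, sLofCut, hcc, hl, hr]
      · have hcc : c (node j l r) = (true, true) := Prod.ext hc1 hc2
        by_cases hlt : (BI (applyCut j c r)) j < (BI (applyCut j c l)) j
        · simp [leaderPlay, applyCut, sLofCut, hcc, hl, hr, BI, hlt]
        · simp [leaderPlay, applyCut, sLofCut, hcc, hl, hr, BI, hlt]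
    · simp only [leaderPlay, applyCut, if_neg hj, hl, hr, BI]

lemma cut_of_strat (L : Fin 2) (sL : GameTree 2 → Bool) :
    ∀ G : GameTree 2,
      BI (applyCut L (fun t => (sL t, !sL t)) G) = leaderPlay L sL G := by
  intro G
  induction G with
  | leaf u => simp [leaderPlay, applyCut, BI]
  | node j l r ihl ihr =>
    by_cases hj : j = L
    · subst hj
      rcases hs : sL (node j l r)
      · simp [leaderPlay, applyCut, hs, ihl, ihr]
      · simp [leaderPlay, applyCut, hs, ihl, ihr]
    · simp only [applyCut, if_neg hj, BI, leaderPlay, ihl, ihr]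

end GameTree

open GameTree in
/-- In a two-player finite perfect-information game in generic
form, the SPE value of the single-contract expanded game (contract for the
leader `L`) equals the pure-strategy Stackelberg value with leader `L`: the
maximum over leader commitments `sL` of `u_L(sL, BR(sL))`. -/
theorem single_contract_eq_stackelberg (L : Fin 2) (G : GameTree 2)
    (hG : G.Generic) :
    sSup {x : ℝ | ∃ c : GameTree 2 → Bool × Bool,
        ValidCut L c G ∧ x = BI (applyCut L c G) L} =
    sSup {x : ℝ | ∃ sL : GameTree 2 → Bool, x = (leaderPlay L sL G) L} := by
  congr 1
  ext x
  constructor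
  · rintro ⟨c, hc, rfl⟩
    exact ⟨sLofCut L c, by rw [leaderPlay_sLofCut L c G hc]⟩
  · rintro ⟨sL, rfl⟩
    refine ⟨fun t => (sL t, !sL t), fun t _ h => ?_, ?_⟩
    · rcases hs : sL t <;> simp [hs] at h
    · rw [cut_of_strat L sL G]
end

section
/- With the recursive NAND gadget utilities, backward induction on the gadget (player 3 choosing between ⊤' and handing off to player 2, player 2 choosing among ⊥', T^L, T^R) propagates a utility vector whose first coordinate is 1 if and only if not both subtrees propagate a vector with first coordinate 1 (i.e., the gadget computes NAND). -/
open GameTree in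
/-- With the recursive NAND gadget utilities, backward induction
on the gadget (player 3 — index 2 — choosing between `⊤'` and handing off to
player 2 — index 1 — who chooses among `⊥'`, `Tᴸ`, `Tᴿ`) propagates a utility
vector whose first coordinate is `1` iff not both subtrees propagate a vector
with first coordinate `1`: the gadget computes NAND. -/
theorem nand_gadget_computes_nand (TL TR : GameTree 3)
    (tL bL tR bR t' b' : Fin 3 → ℝ)
    (hL : BI TL = tL ∨ BI TL = bL) (hR : BI TR = tR ∨ BI TR = bR)
    -- player 2 prefers ⊥ᴸ, ⊥ᴿ to ⊥', and ⊥' to ⊤ᴸ, ⊤ᴿ: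
    (h1 : b' 1 < bL 1) (h2 : b' 1 < bR 1) (h3 : tL 1 < b' 1) (h4 : tR 1 < b' 1)
    -- player 3 prefers ⊤' to ⊥ᴸ, ⊥ᴿ, and ⊥' to ⊤', ⊤ᴸ, ⊤ᴿ:
    (h5 : bL 2 < t' 2) (h6 : bR 2 < t' 2) (h7 : t' 2 < b' 2)
    (h8 : tL 2 < b' 2) (h9 : tR 2 < b' 2)
    -- true vectors have first coordinate 1, false vectors 0:
    (e1 : tL 0 = 1) (e2 : tR 0 = 1) (e3 : bL 0 = 0) (e4 : bR 0 = 0)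
    (e5 : t' 0 = 1) (e6 : b' 0 = 0) :
    (BI (GameTree.node 2 (GameTree.leaf t')
        (GameTree.node 1 TL (GameTree.node 1 (GameTree.leaf b') TR)))) 0 = 1 ↔
      ¬((BI TL) 0 = 1 ∧ (BI TR) 0 = 1) := by
  rcases hL with hL|hL <;> rcases hR with hR|hR <;>
    subst hL hR <;> simp only [BI.eq_1, BI.eq_2] <;> split_ifs <;>
    norm_num [e1, e2, e3, e4, e5, e6] <;> linarith
end

section
/- Necessity direction of the InducibleRegion correctness (case i = 1): if (u, c) ∈ S^L then u is inducible by P1 in the combined game (P1's contract chooses the left branch and plays c); and if (u, c1, c2) ∈ T^L and (v, c') ∈ S^L with u_2 > v_2, then u is inducible by P1 via the contract 'play c1 in all subgames where P2 plays c2, otherwise play c'' — under this contract, u is the dominating outcome. -/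
namespace GameTree

/-- Outcome when `P1` plays cut `c1` and then `P2` plays cut `c2`. -/
noncomputable def cutUtil (p1 p2 : Fin n) (G : GameTree n)
    (c1 c2 : GameTree n → Bool × Bool) : Fin n → ℝ :=
  BI (applyCut p2 c2 (applyCut p1 c1 G))

/-- The inducible region of the coalition `(P1, P2)`: outcomes reachable when
both choose their cuts cooperatively. -/
def RegionBoth (p1 p2 : Fin n) (G : GameTree n) : Set (Fin n → ℝ) :=
  {u | ∃ c1 c2, ValidCut p1 c1 G ∧ ValidCut p2 c2 G ∧ u = cutUtil p1 p2 G c1 c2}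

/-- The inducible region of `P1`: outcomes `P1` can enforce as the SPE outcome
of the expanded game by committing (their contract, a map `g` from `P2`-cuts to
`P1`-cuts, may react to `P2`'s cut), anticipating `P2`'s optimal cut. -/
def RegionP1 (p1 p2 : Fin n) (G : GameTree n) : Set (Fin n → ℝ) :=
  {u | ∃ g : (GameTree n → Bool × Bool) → (GameTree n → Bool × Bool),
    ∃ c2, (∀ c, ValidCut p1 (g c) G) ∧ ValidCut p2 c2 G ∧
      (∀ c', ValidCut p2 c' G →
        cutUtil p1 p2 G (g c') c' p2 ≤ cutUtil p1 p2 G (g c2) c2 p2) ∧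
      u = cutUtil p1 p2 G (g c2) c2}

end GameTree

namespace GameTree

open scoped Classical

variable {n : ℕ}

theorem aux_size_pos (G : GameTree n) : 0 < G.size := by
  cases G <;> simp [size]

theorem aux_size_le_of_mem_subtrees {t G : GameTree n} (h : t ∈ G.subtrees) :
    t.size ≤ G.size := by
  induction G with
  | leaf u => simp [subtrees] at h; subst h; rfl
  | node j a b iha ihb =>
    simp only [subtrees, List.mem_cons, List.mem_append] at h
    rcases h with h | h | h
    · exact le_of_eq (by rw [h])
    · exact le_trans (iha h) (by simp [size]; omega)
    · exact le_trans (ihb h) (by simp [size]; omega)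

theorem aux_mem_subtrees_self (G : GameTree n) : G ∈ G.subtrees := by
  cases G <;> simp [subtrees]

theorem aux_applyCut_congr (i : Fin n) {c c' : GameTree n → Bool × Bool}
    (G : GameTree n) (h : ∀ t ∈ G.subtrees, c t = c' t) :
    applyCut i c G = applyCut i c' G := by
  induction G with
  | leaf u => rfl
  | node j a b iha ihb =>
    have hroot : c (node j a b) = c' (node j a b) := h _ (aux_mem_subtrees_self _)
    have ha : applyCut i c a = applyCut i c' a :=
      iha (fun t ht => h t (by simp [subtrees, ht]))
    have hb : applyCut i c b = applyCut i c' b :=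
      ihb (fun t ht => h t (by simp [subtrees, ht]))
    simp only [applyCut, hroot, ha, hb]

theorem aux_size_applyCut_le (i : Fin n) (c : GameTree n → Bool × Bool)
    (G : GameTree n) : (applyCut i c G).size ≤ G.size := by
  induction G with
  | leaf u => simp [applyCut]
  | node j a b iha ihb =>
    simp only [applyCut]
    split
    · split
      · exact le_trans iha (by simp [size]; omega)
      · split
        · exact le_trans ihb (by simp [size]; omega)
        · simp [size]; omega
    · simp [size]; omega

theorem aux_mem_leafUtils_iff {u : Fin n → ℝ} {G : GameTree n} :
    u ∈ G.leafUtils ↔ u ∈ G.leavesList := by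
  induction G with
  | leaf w => simp [leafUtils, leavesList]
  | node j a b iha ihb => simp [leafUtils, leavesList, iha, ihb]

theorem aux_exists_leafUtils (G : GameTree n) : ∃ u, u ∈ G.leafUtils := by
  induction G with
  | leaf w => exact ⟨w, rfl⟩
  | node j a b iha ihb => exact ⟨iha.choose, Or.inl iha.choose_spec⟩

theorem aux_leafUtils_applyCut_subset (i : Fin n) (c : GameTree n → Bool × Bool)
    (G : GameTree n) : (applyCut i c G).leafUtils ⊆ G.leafUtils := by
  induction G with
  | leaf u => simp [applyCut]
  | node j a b iha ihb =>
    simp only [applyCut]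
    split
    · split
      · exact fun u hu => Or.inl (iha hu)
      · split
        · exact fun u hu => Or.inr (ihb hu)
        · rintro u (hu | hu)
          · exact Or.inl (iha hu)
          · exact Or.inr (ihb hu)
    · rintro u (hu | hu)
      · exact Or.inl (iha hu)
      · exact Or.inr (ihb hu)

theorem aux_leafUtils_of_mem_subtrees {t G : GameTree n} (h : t ∈ G.subtrees) :
    t.leafUtils ⊆ G.leafUtils := by
  induction G with
  | leaf u => simp [subtrees] at h; subst h; exact fun _ h => h
  | node j a b iha ihb =>
    simp only [subtrees, List.mem_cons, List.mem_append] at h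
    rcases h with h | h | h
    · subst h; exact fun _ h => h
    · exact fun u hu => Or.inl (iha h hu)
    · exact fun u hu => Or.inr (ihb h hu)

theorem aux_validCut_left {i j : Fin n} {c : GameTree n → Bool × Bool}
    {a b : GameTree n} (h : ValidCut i c (node j a b)) : ValidCut i c a :=
  fun t ht => h t (by simp [subtrees, ht])

/-- In a generic node game, the leaves of `l` and `r` are disjoint. -/
theorem aux_leaf_disjoint {p : Fin n} {a b : GameTree n}
    (hG : (node p a b).Generic) {w : Fin n → ℝ}
    (ha : w ∈ a.leafUtils) (hb : w ∈ b.leafUtils) : False := by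
  have h := hG p
  simp only [leavesList, List.map_append] at h
  rw [List.nodup_append] at h
  exact h.2.2 _ (List.mem_map_of_mem (aux_mem_leafUtils_iff.1 ha))
    _ (List.mem_map_of_mem (aux_mem_leafUtils_iff.1 hb)) rfl

end GameTree

open GameTree in
/-- Necessity direction of the `InducibleRegion` correctness,
case `i = 1` (a node owned by `P1` with subgames `l`, `r`): any outcome
inducible by `P1` in the left subgame is inducible in the combined game
(choose the left branch and play the witnessing contract); and any outcome `u`
of `T^L` together with `v ∈ S^L` with `u₂ > v₂` is inducible by `P1` via the
contract “play the `T^L`-contract if `P2` cooperates, otherwise play the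
`S^L`-contract”. -/
theorem inducibleRegion_necessity {n : ℕ} (p1 p2 : Fin n) (hp : p1 ≠ p2)
    (l r : GameTree n) (hG : (GameTree.node p1 l r).Generic) :
    (∀ u ∈ RegionP1 p1 p2 l, u ∈ RegionP1 p1 p2 (GameTree.node p1 l r)) ∧
    (∀ u ∈ RegionBoth p1 p2 l, ∀ v ∈ RegionP1 p1 p2 l,
      v p2 < u p2 → u ∈ RegionP1 p1 p2 (GameTree.node p1 l r)) := by
  classical
  -- the root is not a subtree of `l` (or of any pruning of `l`)
  have hnotroot : ∀ t : GameTree n, t.size ≤ l.size → t ≠ GameTree.node p1 l r := by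
    intro t ht heq
    rw [heq] at ht
    have := aux_size_pos r
    simp [GameTree.size] at ht
  -- P1 patch: choose left at the root, play `x` inside `l`, anything in `r`
  set patch : (GameTree n → Bool × Bool) → (GameTree n → Bool × Bool) :=
    fun x t => if t = GameTree.node p1 l r then (true, false)
      else if t ∈ l.subtrees then x t else (true, true) with hpatch
  have hpatchValid : ∀ x, ValidCut p1 x l →
      ValidCut p1 (patch x) (GameTree.node p1 l r) := by
    intro x hx t ht
    by_cases h1 : t = GameTree.node p1 l r
    · simp [hpatch, h1]
    · by_cases h2 : t ∈ l.subtrees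
      · simpa [hpatch, h1, h2] using hx t h2
      · simp [hpatch, h1, h2]
  have hpatchApply : ∀ x,
      applyCut p1 (patch x) (GameTree.node p1 l r) = applyCut p1 x l := by
    intro x
    have h1 : patch x (GameTree.node p1 l r) = (true, false) := by simp [hpatch]
    have h2 : applyCut p1 (patch x) l = applyCut p1 x l := by
      apply aux_applyCut_congr
      intro t ht
      simp [hpatch, hnotroot t (aux_size_le_of_mem_subtrees ht), ht]
    simp [GameTree.applyCut, h1, h2]
  -- P2 tweak: play `d` inside `l`, keep everything elsewhere
  set tweak : (GameTree n → Bool × Bool) → (GameTree n → Bool × Bool) :=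
    fun d t => if t = GameTree.node p1 l r ∨ (t ∈ r.subtrees ∧ t ∉ l.subtrees)
      then (true, true) else d t with htweak
  have htweakValid : ∀ d, ValidCut p2 d l →
      ValidCut p2 (tweak d) (GameTree.node p1 l r) := by
    intro d hd t ht
    simp only [GameTree.subtrees, List.mem_cons, List.mem_append] at ht
    by_cases h1 : t = GameTree.node p1 l r ∨ (t ∈ r.subtrees ∧ t ∉ l.subtrees)
    · simp [htweak, h1]
    · push_neg at h1
      rcases ht with ht | ht | ht
      · exact absurd ht h1.1
      · simpa [htweak, h1.1, h1.2, ht] using hd t ht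
      · have h2 : t ∈ l.subtrees := h1.2 ht
        simpa [htweak, h1.1, h1.2, ht, h2] using hd t h2
  have htweakApply : ∀ d x, applyCut p2 (tweak d) (applyCut p1 x l)
      = applyCut p2 d (applyCut p1 x l) := by
    intro d x
    apply aux_applyCut_congr
    intro t ht
    have hsub : t.leafUtils ⊆ l.leafUtils :=
      (aux_leafUtils_of_mem_subtrees ht).trans (aux_leafUtils_applyCut_subset _ _ _)
    have hsize : t.size ≤ l.size :=
      le_trans (aux_size_le_of_mem_subtrees ht) (aux_size_applyCut_le _ _ _)
    have h2 : ¬ (t ∈ r.subtrees ∧ t ∉ l.subtrees) := by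
      rintro ⟨hr, -⟩
      obtain ⟨w, hw⟩ := aux_exists_leafUtils t
      exact aux_leaf_disjoint hG (hsub hw) (aux_leafUtils_of_mem_subtrees hr hw)
    simp [htweak, hnotroot t hsize, h2]
  -- the outcome of any patched P1 cut against any P2 cut
  have hcomp : ∀ x c', cutUtil p1 p2 (GameTree.node p1 l r) (patch x) c'
      = BI (applyCut p2 c' (applyCut p1 x l)) := by
    intro x c'
    simp only [GameTree.cutUtil, hpatchApply]
  have hcomp2 : ∀ x d, cutUtil p1 p2 (GameTree.node p1 l r) (patch x) (tweak d)
      = cutUtil p1 p2 l x d := by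
    intro x d
    rw [hcomp, htweakApply]
    rfl
  constructor
  · rintro u ⟨g, c2, hvg, hvc2, hopt, hu⟩
    refine ⟨fun c => patch (g (if c = tweak c2 then c2 else c)), tweak c2,
      fun c => hpatchValid _ (hvg _), htweakValid _ hvc2, ?_, ?_⟩
    · intro c' hc'
      by_cases h : c' = tweak c2
      · simp [h]
      · simp only [if_pos rfl, if_neg h, if_true, hcomp2]
        rw [hcomp]
        exact hopt c' (aux_validCut_left hc')
    · simp only [if_pos rfl, if_true, hcomp2]
      exact hu
  · rintro u ⟨c1, c2, hv1, hv2, hu⟩ v ⟨g, d2, hvg, hvd2, hopt, hv⟩ hlt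
    refine ⟨fun c => if c = tweak c2 then patch c1 else patch (g c), tweak c2,
      ?_, htweakValid _ hv2, ?_, ?_⟩
    · intro c
      by_cases h : c = tweak c2
      · simpa [h] using hpatchValid _ hv1
      · simpa [h] using hpatchValid _ (hvg c)
    · intro c' hc'
      by_cases h : c' = tweak c2
      · simp [h]
      · simp only [if_pos rfl, if_neg h, if_true, hcomp2]
        rw [hcomp]
        refine le_of_lt (lt_of_le_of_lt (hopt c' (aux_validCut_left hc')) ?_)
        rw [← hv, ← hu]
        exact hlt
    · simp only [if_pos rfl, if_true, hcomp2]
      exact hu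
end
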